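/- Let y*⁺ = (y_mid, √b·s*), y*_min⁺ = (y_min, ((b+1)/√b)·s*), and y*_max⁺ = (y_max, ((b+1)/√b)·s*). Define the affine function T : ℝ² → ℝ by T(y) = f^(r₀)(y*⁺) + ⟨y*⁺, y − y*⁺⟩ (the tangent plane of f^(r₀) at y*⁺, whose gradient at y*⁺ equals y*⁺). Then T(y*_min⁺) = f^(r₀)(y*_min⁺), T(y*_max⁺) = f^(r₀)(y*_max⁺), and T(y) ≤ f^(r₀)(y) for all y ∈ ℝ². -/
import Mathlib

/-- The condensed energy `f^(r)` associated with the dissipation function `r`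
and the hardening parameter `b`. -/
noncomputable def condensed (b : ℝ) (r : ℝ → ℝ) (y : ℝ × ℝ) : ℝ :=
  (1 / 2) * (y.1 ^ 2 + y.2 ^ 2) - (max (|y.2| - r y.1) 0) ^ 2 / (2 * (b + 1))

/-- The piecewise affine dissipation function `r₀`. -/
noncomputable def r0 (b ymin ymax : ℝ) (t : ℝ) : ℝ :=
  if t ∈ Set.Icc ymin ymax then
    Real.sqrt b * ((ymax - ymin) / 2 - |t - (ymin + ymax) / 2|)
  else 0

theorem stmt_9 (b ymin ymax : ℝ) (hb : 0 < b) (hy : ymin < ymax)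
    (sstar ymid : ℝ) (hs : sstar = (ymax - ymin) / 2) (hm : ymid = (ymin + ymax) / 2)
    (ystar ystarMin ystarMax : ℝ × ℝ)
    (hystar : ystar = (ymid, Real.sqrt b * sstar))
    (hystarMin : ystarMin = (ymin, ((b + 1) / Real.sqrt b) * sstar))
    (hystarMax : ystarMax = (ymax, ((b + 1) / Real.sqrt b) * sstar))
    (T : ℝ × ℝ → ℝ)
    (hT : ∀ y : ℝ × ℝ, T y = condensed b (r0 b ymin ymax) ystar
        + (ystar.1 * (y.1 - ystar.1) + ystar.2 * (y.2 - ystar.2))) :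
    T ystarMin = condensed b (r0 b ymin ymax) ystarMin ∧
    T ystarMax = condensed b (r0 b ymin ymax) ystarMax ∧
    ∀ y : ℝ × ℝ, T y ≤ condensed b (r0 b ymin ymax) y := by
  subst hystar hystarMin hystarMax
  set c := Real.sqrt b with hcdef
  have hc2 : c ^ 2 = b := Real.sq_sqrt hb.le
  have hcpos : 0 < c := Real.sqrt_pos.mpr hb
  have hspos : 0 < sstar := by rw [hs]; linarith
  have h1 : ymid - ymin = sstar := by rw [hs, hm]; ring
  have h2 : ymax - ymid = sstar := by rw [hs, hm]; ring
  have hcsnn : 0 ≤ c * sstar := by positivity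
  have hr0 : ∀ t, ymin ≤ t → t ≤ ymax →
      r0 b ymin ymax t = c * (sstar - |t - ymid|) := by
    intro t ht1 ht2
    rw [r0, if_pos ⟨ht1, ht2⟩, ← hs, ← hm]
  have hrmid : r0 b ymin ymax ymid = c * sstar := by
    rw [hr0 ymid (by linarith) (by linarith), sub_self, abs_zero, sub_zero]
  have hcstar : condensed b (r0 b ymin ymax) (ymid, c * sstar)
      = (1/2) * (ymid ^ 2 + (c * sstar) ^ 2) := by
    simp [condensed, hrmid, abs_of_nonneg hcsnn]
  -- value of r0 at the endpoints
  have hrmin : r0 b ymin ymax ymin = 0 := by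
    rw [hr0 ymin le_rfl hy.le, abs_of_nonpos (by linarith)]
    rw [show -(ymin - ymid) = sstar by linarith]; ring
  have hrmax : r0 b ymin ymax ymax = 0 := by
    rw [hr0 ymax hy.le le_rfl, abs_of_nonneg (by linarith)]
    rw [show ymax - ymid = sstar from h2]; ring
  have hvnn : 0 ≤ (b + 1) / c * sstar := by positivity
  have hcne : c ≠ 0 := ne_of_gt hcpos
  refine ⟨?_, ?_, ?_⟩
  · rw [hT, hcstar]
    simp only [condensed, hrmin, abs_of_nonneg hvnn, sub_zero, max_eq_left hvnn]
    rw [show ymid = ymin + sstar by linarith, ← hc2]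
    field_simp
    ring
  · rw [hT, hcstar]
    simp only [condensed, hrmax, abs_of_nonneg hvnn, sub_zero, max_eq_left hvnn]
    rw [show ymid = ymax - sstar by linarith, ← hc2]
    field_simp
    ring
  · rintro ⟨y1, y2⟩
    rw [hT, hcstar]
    show (1/2) * (ymid ^ 2 + (c * sstar) ^ 2)
        + (ymid * (y1 - ymid) + c * sstar * (y2 - c * sstar))
        ≤ (1/2) * (y1 ^ 2 + y2 ^ 2)
          - (max (|y2| - r0 b ymin ymax y1) 0) ^ 2 / (2 * (b + 1))
    obtain ⟨d, hd0, hds, hrd, hdle⟩ : ∃ d, 0 ≤ d ∧ d ≤ sstar ∧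
        r0 b ymin ymax y1 = c * (sstar - d) ∧ d ≤ |y1 - ymid| := by
      by_cases hmem : y1 ∈ Set.Icc ymin ymax
      · refine ⟨|y1 - ymid|, abs_nonneg _, ?_, hr0 y1 hmem.1 hmem.2, le_rfl⟩
        rw [abs_le]; constructor <;> [linarith [hmem.1]; linarith [hmem.2]]
      · refine ⟨sstar, hspos.le, le_rfl, ?_, ?_⟩
        · rw [r0, if_neg hmem]; ring
        · rw [Set.mem_Icc, not_and_or] at hmem
          rw [le_abs]
          rcases hmem with h | h
          · push_neg at h; right; linarith
          · push_neg at h; left; linarith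
    rw [hrd]
    set M := max (|y2| - c * (sstar - d)) 0 with hMdef
    have hkey : M ^ 2
        ≤ (b + 1) * (d ^ 2 + (|y2| - c * sstar) ^ 2) := by
      rcases le_or_gt (|y2| - c * (sstar - d)) 0 with h | h
      · rw [hMdef, max_eq_right h]; norm_num; positivity
      · rw [hMdef, max_eq_left h.le, ← hc2]
        nlinarith [sq_nonneg (d - c * (|y2| - c * sstar))]
    have hd2 : d ^ 2 ≤ (y1 - ymid) ^ 2 := by
      rw [← sq_abs (y1 - ymid)]
      exact pow_le_pow_left₀ hd0 hdle 2
    have hu2 : (|y2| - c * sstar) ^ 2 ≤ (y2 - c * sstar) ^ 2 := by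
      nlinarith [sq_abs y2, le_abs_self y2,
        mul_nonneg hcsnn (sub_nonneg.mpr (le_abs_self y2))]
    have hM : M ^ 2
        ≤ (b + 1) * ((y1 - ymid) ^ 2 + (y2 - c * sstar) ^ 2) := by
      exact hkey.trans (mul_le_mul_of_nonneg_left (add_le_add hd2 hu2) (by linarith))
    clear_value M
    have hb1 : (0:ℝ) < 2 * (b + 1) := by linarith
    have hdiv : M ^ 2 / (2 * (b + 1))
        ≤ ((y1 - ymid) ^ 2 + (y2 - c * sstar) ^ 2) / 2 := by
      rw [div_le_div_iff₀ hb1 (by norm_num : (0:ℝ) < 2)]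
      nlinarith only [hM]
    have expand : (1/2) * (y1 ^ 2 + y2 ^ 2) - ((1/2) * (ymid ^ 2 + (c * sstar) ^ 2)
        + (ymid * (y1 - ymid) + c * sstar * (y2 - c * sstar)))
        = ((y1 - ymid) ^ 2 + (y2 - c * sstar) ^ 2) / 2 := by ring
    linarith only [hdiv, expand]
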